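/- arXiv:2204.09574 — 6 statements merged into one kernel-verified Lean document; each statement's English description precedes it below -/
import Mathlib

section
/- For any nonempty closed intervals a and b, the radius of the interval product satisfies rad(a·b) ≥ max{|a|·rad(b), rad(a)·|b|}. -/
/-- `rad(a·b) ≥ max{|a|·rad(b), rad(a)·|b|}` for the interval product. -/
theorem rad_interval_mul_ge (a₁ a₂ b₁ b₂ : ℝ) (ha : a₁ ≤ a₂) (hb : b₁ ≤ b₂) :
    max (max |a₁| |a₂| * ((b₂ - b₁) / 2)) (((a₂ - a₁) / 2) * max |b₁| |b₂|) ≤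
      (max (max (a₁*b₁) (a₁*b₂)) (max (a₂*b₁) (a₂*b₂)) -
       min (min (a₁*b₁) (a₁*b₂)) (min (a₂*b₁) (a₂*b₂))) / 2 := by
  set M := max (max (a₁*b₁) (a₁*b₂)) (max (a₂*b₁) (a₂*b₂)) with hM
  set m := min (min (a₁*b₁) (a₁*b₂)) (min (a₂*b₁) (a₂*b₂)) with hm
  have h11M : a₁*b₁ ≤ M := le_max_of_le_left (le_max_left _ _)
  have h12M : a₁*b₂ ≤ M := le_max_of_le_left (le_max_right _ _)
  have h21M : a₂*b₁ ≤ M := le_max_of_le_right (le_max_left _ _)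
  have h22M : a₂*b₂ ≤ M := le_max_of_le_right (le_max_right _ _)
  have h11m : m ≤ a₁*b₁ := min_le_of_left_le (min_le_left _ _)
  have h12m : m ≤ a₁*b₂ := min_le_of_left_le (min_le_right _ _)
  have h21m : m ≤ a₂*b₁ := min_le_of_right_le (min_le_left _ _)
  have h22m : m ≤ a₂*b₂ := min_le_of_right_le (min_le_right _ _)
  rw [max_le_iff]
  constructor
  · rcases le_total |a₁| |a₂| with h | h
    · rw [max_eq_right h]
      rcases abs_cases a₂ with ⟨he, hs⟩ | ⟨he, hs⟩ <;> rw [he] <;> nlinarith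
    · rw [max_eq_left h]
      rcases abs_cases a₁ with ⟨he, hs⟩ | ⟨he, hs⟩ <;> rw [he] <;> nlinarith
  · rcases le_total |b₁| |b₂| with h | h
    · rw [max_eq_right h]
      rcases abs_cases b₂ with ⟨he, hs⟩ | ⟨he, hs⟩ <;> rw [he] <;> nlinarith
    · rw [max_eq_left h]
      rcases abs_cases b₁ with ⟨he, hs⟩ | ⟨he, hs⟩ <;> rw [he] <;> nlinarith
end

section
/- Every nonzero interval a (i.e., a ≠ [0,0]) can be written as a = dev(a) · [χ(a), 1], where dev(a) is the endpoint of a with the larger absolute value (taking the lower endpoint in case of a tie) and χ(a) is the Ratschek functional: χ(a) = a₁/a₂ if |a₂| ≥ |a₁| and a₂/a₁ otherwise. Here the scalar multiple c·[x,y] means [cx,cy] if c ≥ 0 and [cy,cx] if c < 0. -/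
/-- Every nonzero interval can be written as `dev(a) · [χ(a), 1]`. -/
theorem interval_dev_chi_decomposition (a₁ a₂ : ℝ) (ha : a₁ ≤ a₂)
    (hnz : ¬ (a₁ = 0 ∧ a₂ = 0)) :
    let dev := if |a₁| ≥ |a₂| then a₁ else a₂
    let chi := if |a₂| ≥ |a₁| then a₁ / a₂ else a₂ / a₁
    a₁ = min (dev * chi) (dev * 1) ∧ a₂ = max (dev * chi) (dev * 1) := by
  intro dev chi
  by_cases h1 : |a₁| ≥ |a₂| <;> by_cases h2 : |a₂| ≥ |a₁| <;>
    simp only [dev, chi, if_pos, if_neg, h1, h2, if_true, if_false, mul_one]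
  · -- |a₁| = |a₂|
    have h2' : a₂ ≠ 0 := by
      intro h; apply hnz
      have : |a₁| ≤ 0 := by rw [h] at h2; simpa using h2
      constructor
      · exact abs_eq_zero.mp (le_antisymm this (abs_nonneg _))
      · exact h
    have heq : a₁ * (a₁ / a₂) = a₂ := by
      have : a₁ ^ 2 = a₂ ^ 2 := by
        rw [← sq_abs a₁, ← sq_abs a₂, le_antisymm h2 h1]
      field_simp
      nlinarith
    rw [heq]
    constructor
    · exact (min_eq_right ha).symm
    · exact (max_eq_left ha).symm
  · -- |a₁| > |a₂|, so a₁ < 0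
    have h1' : a₁ ≠ 0 := by
      intro h; apply h2; rw [h]; simpa using le_of_lt (not_le.mp h2)
    have heq : a₁ * (a₂ / a₁) = a₂ := by field_simp
    rw [heq]
    constructor
    · exact (min_eq_right ha).symm
    · exact (max_eq_left ha).symm
  · -- |a₂| > |a₁|, a₂ ≠ 0
    have h2' : a₂ ≠ 0 := by
      intro h; apply h1; rw [h]; simpa using le_of_lt (not_le.mp h1)
    have heq : a₂ * (a₁ / a₂) = a₁ := by field_simp
    rw [heq]
    constructor
    · exact (min_eq_left ha).symm
    · exact (max_eq_right ha).symm
  · exact absurd (le_of_not_ge h1) h2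
end

section
/- For nonzero intervals a and b, the Ratschek functional of their product satisfies χ(a·b) = min{χ(a), χ(b), χ(a)·χ(b)}. -/
private lemma ratio_symm (l h : ℝ) (hlh : |l| = |h|) : l / h = h / l := by
  rcases abs_eq_abs.mp hlh with rfl | rfl
  · rfl
  · simp [neg_div, div_neg]

private lemma chiq_neg (l h : ℝ) :
    (if |(-l)| ≥ |(-h)| then (-h) / (-l) else (-l) / (-h)) =
      (if |h| ≥ |l| then l / h else h / l) := by
  simp only [abs_neg, neg_div_neg_eq]
  rcases lt_trichotomy |l| |h| with hc | hc | hc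
  · rw [if_neg (not_le.mpr hc), if_pos hc.le]
  · rw [if_pos hc.ge, if_pos hc.le, ratio_symm l h hc]
  · rw [if_pos hc.le, if_neg (not_le.mpr hc)]

private lemma min4_swap (x y z w : ℝ) :
    min (min x y) (min z w) = min (min w z) (min y x) := by
  rw [min_comm x y, min_comm z w, min_comm (min y x) (min w z)]

private lemma max4_swap (x y z w : ℝ) :
    max (max x y) (max z w) = max (max w z) (max y x) := by
  rw [max_comm x y, max_comm z w, max_comm (max y x) (max w z)]

private lemma minneg_left (x y u v : ℝ) :
    min (min (-y*u) (-y*v)) (min (-x*u) (-x*v)) =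
      -(max (max (x*u) (x*v)) (max (y*u) (y*v))) := by
  simp only [neg_mul, min_neg_neg]
  rw [max_comm (max (y*u) (y*v)) (max (x*u) (x*v))]

private lemma maxneg_left (x y u v : ℝ) :
    max (max (-y*u) (-y*v)) (max (-x*u) (-x*v)) =
      -(min (min (x*u) (x*v)) (min (y*u) (y*v))) := by
  simp only [neg_mul, max_neg_neg]
  rw [min_comm (min (y*u) (y*v)) (min (x*u) (x*v))]

private lemma minneg_right (x y u v : ℝ) :
    min (min (x*(-v)) (x*(-u))) (min (y*(-v)) (y*(-u))) =
      -(max (max (x*u) (x*v)) (max (y*u) (y*v))) := by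
  simp only [mul_neg, min_neg_neg]
  rw [max_comm (x*v) (x*u), max_comm (y*v) (y*u)]

private lemma maxneg_right (x y u v : ℝ) :
    max (max (x*(-v)) (x*(-u))) (max (y*(-v)) (y*(-u))) =
      -(min (min (x*u) (x*v)) (min (y*u) (y*v))) := by
  simp only [mul_neg, max_neg_neg]
  rw [min_comm (x*v) (x*u), min_comm (y*v) (y*u)]

private lemma key (a₁ a₂ b₁ b₂ : ℝ) (ha2 : 0 < a₂) (hb2 : 0 < b₂)
    (ha : |a₁| ≤ a₂) (hb : |b₁| ≤ b₂) :
    (if |max (max (a₁*b₁) (a₁*b₂)) (max (a₂*b₁) (a₂*b₂))| ≥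
        |min (min (a₁*b₁) (a₁*b₂)) (min (a₂*b₁) (a₂*b₂))| then
      min (min (a₁*b₁) (a₁*b₂)) (min (a₂*b₁) (a₂*b₂)) /
        max (max (a₁*b₁) (a₁*b₂)) (max (a₂*b₁) (a₂*b₂))
    else
      max (max (a₁*b₁) (a₁*b₂)) (max (a₂*b₁) (a₂*b₂)) /
        min (min (a₁*b₁) (a₁*b₂)) (min (a₂*b₁) (a₂*b₂))) =
    min (min (a₁ / a₂) (b₁ / b₂)) (a₁ / a₂ * (b₁ / b₂)) := by
  obtain ⟨ha1, ha2'⟩ := abs_le.mp ha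
  obtain ⟨hb1, hb2'⟩ := abs_le.mp hb
  rcases le_or_gt 0 a₁ with hA | hA <;> rcases le_or_gt 0 b₁ with hB | hB
  · -- 0 ≤ a₁, 0 ≤ b₁
    have hpLo : min (min (a₁*b₁) (a₁*b₂)) (min (a₂*b₁) (a₂*b₂)) = a₁*b₁ := by
      rw [min_eq_left (by nlinarith : a₁*b₁ ≤ a₁*b₂),
        min_eq_left (le_min (by nlinarith) (by nlinarith))]
    have hpHi : max (max (a₁*b₁) (a₁*b₂)) (max (a₂*b₁) (a₂*b₂)) = a₂*b₂ := by
      rw [max_eq_right (by nlinarith : a₂*b₁ ≤ a₂*b₂),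
        max_eq_right (max_le (by nlinarith) (by nlinarith))]
    rw [hpLo, hpHi, if_pos (by
      rw [abs_of_nonneg (mul_nonneg hA hB), abs_of_nonneg (mul_pos ha2 hb2).le]
      nlinarith)]
    rw [min_eq_right (le_min
      (mul_le_of_le_one_right (div_nonneg hA ha2.le) ((div_le_one hb2).mpr hb2'))
      (mul_le_of_le_one_left (div_nonneg hB hb2.le) ((div_le_one ha2).mpr ha2'))),
      div_mul_div_comm]
  · -- 0 ≤ a₁, b₁ < 0
    have hpLo : min (min (a₁*b₁) (a₁*b₂)) (min (a₂*b₁) (a₂*b₂)) = a₂*b₁ := by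
      rw [min_eq_left (by nlinarith : a₁*b₁ ≤ a₁*b₂),
        min_eq_left (by nlinarith : a₂*b₁ ≤ a₂*b₂),
        min_eq_right (by nlinarith : a₂*b₁ ≤ a₁*b₁)]
    have hpHi : max (max (a₁*b₁) (a₁*b₂)) (max (a₂*b₁) (a₂*b₂)) = a₂*b₂ := by
      rw [max_eq_right (by nlinarith : a₁*b₁ ≤ a₁*b₂),
        max_eq_right (by nlinarith : a₂*b₁ ≤ a₂*b₂),
        max_eq_right (by nlinarith : a₁*b₂ ≤ a₂*b₂)]
    rw [hpLo, hpHi, if_pos (by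
      rw [abs_of_nonpos (by nlinarith : a₂*b₁ ≤ 0),
        abs_of_nonneg (mul_pos ha2 hb2).le]
      nlinarith)]
    have hχA0 : 0 ≤ a₁ / a₂ := div_nonneg hA ha2.le
    have hχA1 : a₁ / a₂ ≤ 1 := (div_le_one ha2).mpr ha2'
    have hχB : b₁ / b₂ ≤ 0 := div_nonpos_of_nonpos_of_nonneg hB.le hb2.le
    rw [min_eq_right (le_trans hχB hχA0),
      min_eq_left (by nlinarith : b₁ / b₂ ≤ a₁ / a₂ * (b₁ / b₂)),
      mul_div_mul_left b₁ b₂ (ne_of_gt ha2)]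
  · -- a₁ < 0, 0 ≤ b₁
    have hpLo : min (min (a₁*b₁) (a₁*b₂)) (min (a₂*b₁) (a₂*b₂)) = a₁*b₂ := by
      rw [min_eq_right (by nlinarith : a₁*b₂ ≤ a₁*b₁),
        min_eq_left (by nlinarith : a₂*b₁ ≤ a₂*b₂),
        min_eq_left (by nlinarith : a₁*b₂ ≤ a₂*b₁)]
    have hpHi : max (max (a₁*b₁) (a₁*b₂)) (max (a₂*b₁) (a₂*b₂)) = a₂*b₂ := by
      rw [max_eq_left (by nlinarith : a₁*b₂ ≤ a₁*b₁),
        max_eq_right (by nlinarith : a₂*b₁ ≤ a₂*b₂),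
        max_eq_right (by nlinarith : a₁*b₁ ≤ a₂*b₂)]
    rw [hpLo, hpHi, if_pos (by
      rw [abs_of_nonpos (by nlinarith : a₁*b₂ ≤ 0),
        abs_of_nonneg (mul_pos ha2 hb2).le]
      nlinarith)]
    have hχB0 : 0 ≤ b₁ / b₂ := div_nonneg hB hb2.le
    have hχB1 : b₁ / b₂ ≤ 1 := (div_le_one hb2).mpr hb2'
    have hχA : a₁ / a₂ ≤ 0 := div_nonpos_of_nonpos_of_nonneg hA.le ha2.le
    rw [min_eq_left (le_trans hχA hχB0),
      min_eq_left (by nlinarith : a₁ / a₂ ≤ a₁ / a₂ * (b₁ / b₂)),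
      mul_div_mul_right a₁ a₂ (ne_of_gt hb2)]
  · -- a₁ < 0, b₁ < 0
    have hpLo : min (min (a₁*b₁) (a₁*b₂)) (min (a₂*b₁) (a₂*b₂)) =
        min (a₁*b₂) (a₂*b₁) := by
      rw [min_eq_right (by nlinarith : a₁*b₂ ≤ a₁*b₁),
        min_eq_left (by nlinarith : a₂*b₁ ≤ a₂*b₂)]
    have hpHi : max (max (a₁*b₁) (a₁*b₂)) (max (a₂*b₁) (a₂*b₂)) = a₂*b₂ := by
      rw [max_eq_left (by nlinarith : a₁*b₂ ≤ a₁*b₁),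
        max_eq_right (by nlinarith : a₂*b₁ ≤ a₂*b₂),
        max_eq_right (by nlinarith : a₁*b₁ ≤ a₂*b₂)]
    rw [hpLo, hpHi, if_pos (by
      rw [abs_of_nonneg (mul_pos ha2 hb2).le]
      refine abs_le.mpr ⟨le_min (by nlinarith) (by nlinarith), ?_⟩
      exact le_trans (min_le_left _ _) (by nlinarith))]
    have hχA : a₁ / a₂ ≤ 0 := div_nonpos_of_nonpos_of_nonneg hA.le ha2.le
    have hχB : b₁ / b₂ ≤ 0 := div_nonpos_of_nonpos_of_nonneg hB.le hb2.le
    rw [min_eq_left (le_trans (min_le_left _ _) (by nlinarith :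
        a₁ / a₂ ≤ a₁ / a₂ * (b₁ / b₂))),
      ← min_div_div_right (mul_pos ha2 hb2).le,
      mul_div_mul_right a₁ a₂ (ne_of_gt hb2),
      mul_div_mul_left b₁ b₂ (ne_of_gt ha2)]

private lemma dichot (a₁ a₂ : ℝ) (h : a₁ ≤ a₂) (hn : ¬(a₁ = 0 ∧ a₂ = 0)) :
    (0 < a₂ ∧ |a₁| ≤ a₂) ∨ (a₁ < 0 ∧ |a₂| ≤ -a₁) := by
  rcases le_or_gt a₂ 0 with h2 | h2
  · right
    have h1 : a₁ < 0 := by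
      rcases lt_or_eq_of_le h with h' | h'
      · by_contra hc
        push_neg at hc
        exact hn ⟨le_antisymm (h.trans h2) hc, by nlinarith⟩
      · subst h'
        rcases lt_or_eq_of_le h2 with h' | h'
        · exact h'
        · exact absurd ⟨h', h'⟩ hn
    exact ⟨h1, by rw [abs_of_nonpos h2]; linarith⟩
  · rcases le_or_gt |a₁| a₂ with h3 | h3
    · exact Or.inl ⟨h2, h3⟩
    · right
      rcases abs_cases a₁ with ⟨he, hs⟩ | ⟨he, hs⟩
      · exact absurd h3 (by push_neg; rw [he]; linarith)
      · exact ⟨by linarith [he ▸ h3], by rw [abs_of_pos h2]; linarith [he ▸ h3]⟩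

/-- Ratschek functional of a product of nonzero intervals:
`χ(a·b) = min{χ(a), χ(b), χ(a)·χ(b)}`. -/
theorem chi_interval_mul (a₁ a₂ b₁ b₂ : ℝ) (ha : a₁ ≤ a₂) (hb : b₁ ≤ b₂)
    (hna : ¬ (a₁ = 0 ∧ a₂ = 0)) (hnb : ¬ (b₁ = 0 ∧ b₂ = 0)) :
    let chiA := if |a₂| ≥ |a₁| then a₁ / a₂ else a₂ / a₁
    let chiB := if |b₂| ≥ |b₁| then b₁ / b₂ else b₂ / b₁
    let pLo := min (min (a₁*b₁) (a₁*b₂)) (min (a₂*b₁) (a₂*b₂))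
    let pHi := max (max (a₁*b₁) (a₁*b₂)) (max (a₂*b₁) (a₂*b₂))
    (if |pHi| ≥ |pLo| then pLo / pHi else pHi / pLo) =
      min (min chiA chiB) (chiA * chiB) := by
  intro chiA chiB pLo pHi
  simp only [chiA, chiB, pLo, pHi]
  rcases dichot a₁ a₂ ha hna with ⟨ha2, ha3⟩ | ⟨ha1, ha3⟩ <;>
    rcases dichot b₁ b₂ hb hnb with ⟨hb2, hb3⟩ | ⟨hb1, hb3⟩
  · -- both "positive"
    have hcA : (if |a₂| ≥ |a₁| then a₁ / a₂ else a₂ / a₁) = a₁ / a₂ :=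
      if_pos (by rw [abs_of_pos ha2]; exact ha3)
    have hcB : (if |b₂| ≥ |b₁| then b₁ / b₂ else b₂ / b₁) = b₁ / b₂ :=
      if_pos (by rw [abs_of_pos hb2]; exact hb3)
    rw [hcA, hcB]
    exact key a₁ a₂ b₁ b₂ ha2 hb2 ha3 hb3
  · -- a positive, b negative
    have hcA : (if |a₂| ≥ |a₁| then a₁ / a₂ else a₂ / a₁) = a₁ / a₂ :=
      if_pos (by rw [abs_of_pos ha2]; exact ha3)
    have hcB : (if |b₂| ≥ |b₁| then b₁ / b₂ else b₂ / b₁) = b₂ / b₁ := by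
      by_cases hc : |b₂| ≥ |b₁|
      · rw [if_pos hc]
        apply ratio_symm
        have h1 : |b₁| = -b₁ := abs_of_neg hb1
        have h2 : |b₂| ≤ -b₁ := hb3
        rw [h1]; rw [h1] at hc; linarith
      · rw [if_neg hc]
    have hk := key a₁ a₂ (-b₂) (-b₁) ha2 (neg_pos.mpr hb1) ha3
      (by rw [abs_neg]; exact hb3)
    rw [minneg_right a₁ a₂ b₁ b₂, maxneg_right a₁ a₂ b₁ b₂, chiq_neg,
      neg_div_neg_eq] at hk
    rw [hcA, hcB]
    exact hk
  · -- a negative, b positive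
    have hcA : (if |a₂| ≥ |a₁| then a₁ / a₂ else a₂ / a₁) = a₂ / a₁ := by
      by_cases hc : |a₂| ≥ |a₁|
      · rw [if_pos hc]
        apply ratio_symm
        have h1 : |a₁| = -a₁ := abs_of_neg ha1
        rw [h1]; rw [h1] at hc; linarith [ha3]
      · rw [if_neg hc]
    have hcB : (if |b₂| ≥ |b₁| then b₁ / b₂ else b₂ / b₁) = b₁ / b₂ :=
      if_pos (by rw [abs_of_pos hb2]; exact hb3)
    have hk := key (-a₂) (-a₁) b₁ b₂ (neg_pos.mpr ha1) hb2
      (by rw [abs_neg]; exact ha3) hb3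
    rw [minneg_left a₁ a₂ b₁ b₂, maxneg_left a₁ a₂ b₁ b₂, chiq_neg,
      neg_div_neg_eq] at hk
    rw [hcA, hcB]
    exact hk
  · -- both negative
    have hcA : (if |a₂| ≥ |a₁| then a₁ / a₂ else a₂ / a₁) = a₂ / a₁ := by
      by_cases hc : |a₂| ≥ |a₁|
      · rw [if_pos hc]
        apply ratio_symm
        have h1 : |a₁| = -a₁ := abs_of_neg ha1
        rw [h1]; rw [h1] at hc; linarith [ha3]
      · rw [if_neg hc]
    have hcB : (if |b₂| ≥ |b₁| then b₁ / b₂ else b₂ / b₁) = b₂ / b₁ := by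
      by_cases hc : |b₂| ≥ |b₁|
      · rw [if_pos hc]
        apply ratio_symm
        have h1 : |b₁| = -b₁ := abs_of_neg hb1
        rw [h1]; rw [h1] at hc; linarith [hb3]
      · rw [if_neg hc]
    have hk := key (-a₂) (-a₁) (-b₂) (-b₁) (neg_pos.mpr ha1) (neg_pos.mpr hb1)
      (by rw [abs_neg]; exact ha3) (by rw [abs_neg]; exact hb3)
    have hmin : min (min (-a₂*(-b₂)) (-a₂*(-b₁))) (min (-a₁*(-b₂)) (-a₁*(-b₁)))
        = min (min (a₁*b₁) (a₁*b₂)) (min (a₂*b₁) (a₂*b₂)) := by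
      simp only [neg_mul_neg]
      exact min4_swap _ _ _ _
    have hmax : max (max (-a₂*(-b₂)) (-a₂*(-b₁))) (max (-a₁*(-b₂)) (-a₁*(-b₁)))
        = max (max (a₁*b₁) (a₁*b₂)) (max (a₂*b₁) (a₂*b₂)) := by
      simp only [neg_mul_neg]
      exact max4_swap _ _ _ _
    rw [hmin, hmax, neg_div_neg_eq, neg_div_neg_eq] at hk
    rw [hcA, hcB]
    exact hk
end

section
/- For nonzero intervals a and b, the width of the interval product satisfies wid(a·b) = |a|·|b|·(1 − χ(a·b)), where |·| denotes the magnitude and χ the Ratschek functional. -/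
lemma max_mul_max (x y u v : ℝ) (hx : 0 ≤ x) (hy : 0 ≤ y) (hu : 0 ≤ u) (hv : 0 ≤ v) :
    max (max (x*u) (x*v)) (max (y*u) (y*v)) = max x y * max u v := by
  apply le_antisymm
  · have hxy : 0 ≤ max x y := le_max_of_le_left hx
    apply max_le <;> apply max_le
    · exact mul_le_mul (le_max_left _ _) (le_max_left _ _) hu hxy
    · exact mul_le_mul (le_max_left _ _) (le_max_right _ _) hv hxy
    · exact mul_le_mul (le_max_right _ _) (le_max_left _ _) hu hxy
    · exact mul_le_mul (le_max_right _ _) (le_max_right _ _) hv hxy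
  · rcases le_total x y with h | h <;> rcases le_total u v with h2 | h2
    · rw [max_eq_right h, max_eq_right h2]; exact le_max_of_le_right (le_max_right _ _)
    · rw [max_eq_right h, max_eq_left h2]; exact le_max_of_le_right (le_max_left _ _)
    · rw [max_eq_left h, max_eq_right h2]; exact le_max_of_le_left (le_max_right _ _)
    · rw [max_eq_left h, max_eq_left h2]; exact le_max_of_le_left (le_max_left _ _)

lemma abs_minmax4 (s t u v : ℝ) :
    max |min (min s t) (min u v)| |max (max s t) (max u v)| =
      max (max |s| |t|) (max |u| |v|) := by
  set L := min (min s t) (min u v)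
  set H := max (max s t) (max u v)
  apply le_antisymm
  · apply max_le
    · rcases le_total 0 L with h | h
      · calc |L| = L := abs_of_nonneg h
          _ ≤ s := min_le_of_left_le (min_le_left _ _)
          _ ≤ |s| := le_abs_self s
          _ ≤ _ := le_max_of_le_left (le_max_left _ _)
      · have : -L ≤ max (max |s| |t|) (max |u| |v|) ∨ True := Or.inr trivial
        have hL : L = min (min s t) (min u v) := rfl
        rw [abs_of_nonpos h]
        rcases le_total (min s t) (min u v) with h1 | h1
        · rw [hL, min_eq_left h1]
          rcases le_total s t with h2 | h2
          · rw [min_eq_left h2]; exact (neg_le_abs s).trans (le_max_of_le_left (le_max_left _ _))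
          · rw [min_eq_right h2]; exact (neg_le_abs t).trans (le_max_of_le_left (le_max_right _ _))
        · rw [hL, min_eq_right h1]
          rcases le_total u v with h2 | h2
          · rw [min_eq_left h2]; exact (neg_le_abs u).trans (le_max_of_le_right (le_max_left _ _))
          · rw [min_eq_right h2]; exact (neg_le_abs v).trans (le_max_of_le_right (le_max_right _ _))
    · have hH : H = max (max s t) (max u v) := rfl
      rcases le_total (max s t) (max u v) with h1 | h1
      · rw [hH, max_eq_right h1]
        rcases le_total u v with h2 | h2
        · rw [max_eq_right h2]; exact le_max_of_le_right (le_max_right _ _)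
        · rw [max_eq_left h2]; exact le_max_of_le_right (le_max_left _ _)
      · rw [hH, max_eq_left h1]
        rcases le_total s t with h2 | h2
        · rw [max_eq_right h2]; exact le_max_of_le_left (le_max_right _ _)
        · rw [max_eq_left h2]; exact le_max_of_le_left (le_max_left _ _)
  · have key : ∀ w : ℝ, L ≤ w → w ≤ H → |w| ≤ max |L| |H| := by
      intro w h1 h2
      exact abs_le_max_abs_abs h1 h2
    apply max_le <;> apply max_le <;> apply key
    · exact min_le_of_left_le (min_le_left _ _)
    · exact le_max_of_le_left (le_max_left _ _)
    · exact min_le_of_left_le (min_le_right _ _)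
    · exact le_max_of_le_left (le_max_right _ _)
    · exact min_le_of_right_le (min_le_left _ _)
    · exact le_max_of_le_right (le_max_left _ _)
    · exact min_le_of_right_le (min_le_right _ _)
    · exact le_max_of_le_right (le_max_right _ _)

/-- `wid(a·b) = |a|·|b|·(1 − χ(a·b))` for nonzero intervals. -/
theorem wid_interval_mul_chi (a₁ a₂ b₁ b₂ : ℝ) (ha : a₁ ≤ a₂) (hb : b₁ ≤ b₂)
    (hna : ¬ (a₁ = 0 ∧ a₂ = 0)) (hnb : ¬ (b₁ = 0 ∧ b₂ = 0)) :
    let pLo := min (min (a₁*b₁) (a₁*b₂)) (min (a₂*b₁) (a₂*b₂))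
    let pHi := max (max (a₁*b₁) (a₁*b₂)) (max (a₂*b₁) (a₂*b₂))
    let chiP := if |pHi| ≥ |pLo| then pLo / pHi else pHi / pLo
    pHi - pLo = max |a₁| |a₂| * max |b₁| |b₂| * (1 - chiP) := by
  intro pLo pHi chiP
  have hLoHi : pLo ≤ pHi :=
    ((min_le_left _ _).trans (min_le_left _ _)).trans
      ((le_max_left _ _).trans (le_max_left _ _))
  have hM : max |pLo| |pHi| = max |a₁| |a₂| * max |b₁| |b₂| := by
    have h1 := abs_minmax4 (a₁*b₁) (a₁*b₂) (a₂*b₁) (a₂*b₂)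
    have h2 := max_mul_max |a₁| |a₂| |b₁| |b₂| (abs_nonneg _) (abs_nonneg _)
      (abs_nonneg _) (abs_nonneg _)
    simp only [abs_mul] at h1
    rw [show max |pLo| |pHi| = max |min (min (a₁*b₁) (a₁*b₂)) (min (a₂*b₁) (a₂*b₂))|
      |max (max (a₁*b₁) (a₁*b₂)) (max (a₂*b₁) (a₂*b₂))| from rfl, h1, h2]
  have hapos : 0 < max |a₁| |a₂| := by
    have : a₁ ≠ 0 ∨ a₂ ≠ 0 := by tauto
    rcases this with h | h
    · exact lt_of_lt_of_le (abs_pos.mpr h) (le_max_left _ _)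
    · exact lt_of_lt_of_le (abs_pos.mpr h) (le_max_right _ _)
  have hbpos : 0 < max |b₁| |b₂| := by
    have : b₁ ≠ 0 ∨ b₂ ≠ 0 := by tauto
    rcases this with h | h
    · exact lt_of_lt_of_le (abs_pos.mpr h) (le_max_left _ _)
    · exact lt_of_lt_of_le (abs_pos.mpr h) (le_max_right _ _)
  have hMpos : 0 < max |pLo| |pHi| := hM ▸ mul_pos hapos hbpos
  rw [← hM]
  by_cases hc : |pHi| ≥ |pLo|
  · have hchi : chiP = pLo / pHi := if_pos hc
    rw [hchi, max_eq_right hc]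
    have hHne : pHi ≠ 0 := by
      intro h0
      rw [h0, abs_zero] at hc
      have : |pLo| = 0 := le_antisymm hc (abs_nonneg _)
      rw [h0, this, abs_zero] at hMpos
      simp at hMpos
    rcases lt_trichotomy pHi 0 with h | h | h
    · have hLneg : pLo < 0 := lt_of_le_of_lt hLoHi h
      rw [abs_of_neg h] at hc ⊢
      rw [abs_of_neg hLneg] at hc
      have hpe : pLo = pHi := le_antisymm hLoHi (by linarith)
      rw [hpe, div_self hHne]; ring
    · exact absurd h hHne
    · rw [abs_of_pos h]; field_simp
  · push_neg at hc
    have hchi : chiP = pHi / pLo := if_neg (not_le.mpr hc)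
    rw [hchi, max_eq_left hc.le]
    have hLneg : pLo < 0 := by
      by_contra h
      push_neg at h
      have : pLo ≤ pHi := hLoHi
      rw [abs_of_nonneg h, abs_of_nonneg (h.trans hLoHi)] at hc
      linarith
    rw [abs_of_neg hLneg]
    field_simp [hLneg.ne]
    ring
end

section
/- For nonzero intervals a and b, the width of the interval product satisfies wid(a·b) = |a|·|b|·(1 − min{χ(a), χ(b), χ(a)·χ(b)}). -/
private lemma wid_scale (C x y : ℝ) (hC : 0 ≤ C) (hx1 : -1 ≤ x) (hx2 : x ≤ 1)
    (hy1 : -1 ≤ y) (hy2 : y ≤ 1) :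
    max (max (C*(x*y)) (C*x)) (max (C*y) C) - min (min (C*(x*y)) (C*x)) (min (C*y) C)
      = C * (1 - min (min x y) (x*y)) := by
  have h1 : x*y ≤ 1 := by nlinarith
  have h2 : min (min x y) (x*y) ≤ 1 := le_trans (le_trans (min_le_left _ _) (min_le_left _ _)) hx2
  have hM : max (max (x*y) x) (max y 1) = 1 := by
    apply le_antisymm
    · simp only [max_le_iff]
      exact ⟨⟨h1, hx2⟩, hy2, le_rfl⟩
    · exact le_max_of_le_right (le_max_right _ _)
  have hm : min (min (x*y) x) (min y 1) = min (min x y) (x*y) := by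
    apply le_antisymm
    · exact le_min (le_min (le_trans (min_le_left _ _) (min_le_right _ _))
        (le_trans (min_le_right _ _) (min_le_left _ _)))
        (le_trans (min_le_left _ _) (min_le_left _ _))
    · exact le_min (le_min (min_le_right _ _)
        (le_trans (min_le_left _ _) (min_le_left _ _)))
        (le_min (le_trans (min_le_left _ _) (min_le_right _ _)) h2)
  calc max (max (C*(x*y)) (C*x)) (max (C*y) C) - min (min (C*(x*y)) (C*x)) (min (C*y) C)
      = C * max (max (x*y) x) (max y 1) - C * min (min (x*y) x) (min y 1) := by
        rw [mul_max_of_nonneg _ _ hC, mul_max_of_nonneg _ _ hC, mul_max_of_nonneg _ _ hC,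
          mul_min_of_nonneg _ _ hC, mul_min_of_nonneg _ _ hC, mul_min_of_nonneg _ _ hC, mul_one]
    _ = C * 1 - C * min (min x y) (x*y) := by rw [hM, hm]
    _ = C * (1 - min (min x y) (x*y)) := by ring

private lemma interval_decomp (a₁ a₂ : ℝ) (h : a₁ ≤ a₂) (hn : ¬ (a₁ = 0 ∧ a₂ = 0)) :
    (-1 ≤ (if |a₂| ≥ |a₁| then a₁ / a₂ else a₂ / a₁) ∧
      (if |a₂| ≥ |a₁| then a₁ / a₂ else a₂ / a₁) ≤ 1) ∧
    ((0 < a₂ ∧ max |a₁| |a₂| = a₂ ∧ a₁ = a₂ * (if |a₂| ≥ |a₁| then a₁ / a₂ else a₂ / a₁)) ∨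
     (a₁ < 0 ∧ max |a₁| |a₂| = -a₁ ∧ a₂ = a₁ * (if |a₂| ≥ |a₁| then a₁ / a₂ else a₂ / a₁))) := by
  by_cases hc : |a₂| ≥ |a₁|
  · simp only [hc, if_true]
    rcases lt_trichotomy a₂ 0 with h2 | h2 | h2
    · -- a₂ < 0 : then a₁ = a₂
      have h1 : |a₁| = -a₁ := abs_of_neg (lt_of_le_of_lt h h2)
      have h2' : |a₂| = -a₂ := abs_of_neg h2
      have heq : a₁ = a₂ := by
        have := hc
        rw [h1, h2'] at this
        linarith
      have hchi : a₁ / a₂ = 1 := by rw [heq]; exact div_self (ne_of_lt h2)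
      refine ⟨⟨by rw [hchi]; norm_num, by rw [hchi]⟩, Or.inr ⟨by linarith, ?_, ?_⟩⟩
      · rw [h1, h2', heq, max_self]
      · rw [hchi, mul_one, heq]
    · exfalso
      have : |a₁| = 0 := le_antisymm (by simpa [h2] using hc) (abs_nonneg _)
      exact hn ⟨abs_eq_zero.mp this, h2⟩
    · have h2' : |a₂| = a₂ := abs_of_pos h2
      have habs : |a₁ / a₂| ≤ 1 := by
        rw [abs_div]
        exact div_le_one_of_le₀ hc (abs_nonneg _)
      obtain ⟨hl, hr⟩ := abs_le.mp habs
      refine ⟨⟨hl, hr⟩, Or.inl ⟨h2, ?_, ?_⟩⟩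
      · rw [max_eq_right hc, h2']
      · field_simp
  · have hc' : |a₂| < |a₁| := lt_of_not_ge hc
    simp only [hc, if_false]
    have h1 : a₁ < 0 := by
      by_contra hcon
      push_neg at hcon
      have : |a₁| = a₁ := abs_of_nonneg hcon
      have : |a₂| = a₂ := abs_of_nonneg (le_trans hcon h)
      rw [‹|a₁| = a₁›, this] at hc'
      linarith
    have habs : |a₂ / a₁| ≤ 1 := by
      rw [abs_div]
      exact div_le_one_of_le₀ (le_of_lt hc') (abs_nonneg _)
    obtain ⟨hl, hr⟩ := abs_le.mp habs
    refine ⟨⟨hl, hr⟩, Or.inr ⟨h1, ?_, ?_⟩⟩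
    · rw [max_eq_left (le_of_lt hc'), abs_of_neg h1]
    · rw [mul_comm, div_mul_cancel₀ _ (ne_of_lt h1)]

/-- `wid(a·b) = |a|·|b|·(1 − min{χ(a), χ(b), χ(a)·χ(b)})` for nonzero intervals. -/
theorem wid_interval_mul_min_chi (a₁ a₂ b₁ b₂ : ℝ) (ha : a₁ ≤ a₂) (hb : b₁ ≤ b₂)
    (hna : ¬ (a₁ = 0 ∧ a₂ = 0)) (hnb : ¬ (b₁ = 0 ∧ b₂ = 0)) :
    let chiA := if |a₂| ≥ |a₁| then a₁ / a₂ else a₂ / a₁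
    let chiB := if |b₂| ≥ |b₁| then b₁ / b₂ else b₂ / b₁
    let pLo := min (min (a₁*b₁) (a₁*b₂)) (min (a₂*b₁) (a₂*b₂))
    let pHi := max (max (a₁*b₁) (a₁*b₂)) (max (a₂*b₁) (a₂*b₂))
    pHi - pLo = max |a₁| |a₂| * max |b₁| |b₂| * (1 - min (min chiA chiB) (chiA * chiB)) := by
  show max (max (a₁*b₁) (a₁*b₂)) (max (a₂*b₁) (a₂*b₂))
      - min (min (a₁*b₁) (a₁*b₂)) (min (a₂*b₁) (a₂*b₂))
      = max |a₁| |a₂| * max |b₁| |b₂| *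
        (1 - min (min (if |a₂| ≥ |a₁| then a₁ / a₂ else a₂ / a₁)
                      (if |b₂| ≥ |b₁| then b₁ / b₂ else b₂ / b₁))
          ((if |a₂| ≥ |a₁| then a₁ / a₂ else a₂ / a₁) *
           (if |b₂| ≥ |b₁| then b₁ / b₂ else b₂ / b₁)))
  have hda := interval_decomp a₁ a₂ ha hna
  have hdb := interval_decomp b₁ b₂ hb hnb
  set x := (if |a₂| ≥ |a₁| then a₁ / a₂ else a₂ / a₁) with hxd
  set y := (if |b₂| ≥ |b₁| then b₁ / b₂ else b₂ / b₁) with hyd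
  obtain ⟨⟨hx1, hx2⟩, hca⟩ := hda
  obtain ⟨⟨hy1, hy2⟩, hcb⟩ := hdb
  rcases hca with ⟨ha2, hmaxa, haa⟩ | ⟨ha1, hmaxa, haa⟩ <;>
    rcases hcb with ⟨hb2, hmaxb, hbb⟩ | ⟨hb1, hmaxb, hbb⟩
  · -- a up, b up
    rw [hmaxa, hmaxb, haa, hbb]
    rw [show a₂ * x * (b₂ * y) = a₂*b₂*(x*y) by ring,
        show a₂ * x * b₂ = a₂*b₂*x by ring,
        show a₂ * (b₂ * y) = a₂*b₂*y by ring]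
    exact wid_scale (a₂*b₂) x y (le_of_lt (mul_pos ha2 hb2)) hx1 hx2 hy1 hy2
  · -- a up, b down
    rw [hmaxa, hmaxb, haa, hbb]
    set C := a₂ * -b₁ with hCd
    have hC : 0 ≤ C := by rw [hCd]; exact mul_nonneg ha2.le (by linarith)
    rw [show a₂ * x * b₁ = -(C*x) by rw [hCd]; ring,
        show a₂ * x * (b₁ * y) = -(C*(x*y)) by rw [hCd]; ring,
        show a₂ * b₁ = -C by rw [hCd]; ring,
        show a₂ * (b₁ * y) = -(C*y) by rw [hCd]; ring]
    rw [max_neg_neg, max_neg_neg, max_neg_neg, min_neg_neg, min_neg_neg, min_neg_neg]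
    rw [min_comm (C*x) (C*(x*y)), min_comm C (C*y), max_comm (C*x) (C*(x*y)), max_comm C (C*y)]
    have hS := wid_scale C x y hC hx1 hx2 hy1 hy2
    linarith [hS]
  · -- a down, b up
    rw [hmaxa, hmaxb, haa, hbb]
    set C := -a₁ * b₂ with hCd
    have hC : 0 ≤ C := by rw [hCd]; exact mul_nonneg (by linarith) hb2.le
    rw [show a₁ * (b₂ * y) = -(C*y) by rw [hCd]; ring,
        show a₁ * b₂ = -C by rw [hCd]; ring,
        show a₁ * x * (b₂ * y) = -(C*(x*y)) by rw [hCd]; ring,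
        show a₁ * x * b₂ = -(C*x) by rw [hCd]; ring]
    rw [max_neg_neg, max_neg_neg, max_neg_neg, min_neg_neg, min_neg_neg, min_neg_neg]
    rw [min_comm (min (C*y) C) (min (C*(x*y)) (C*x)),
        max_comm (max (C*y) C) (max (C*(x*y)) (C*x))]
    have hS := wid_scale C x y hC hx1 hx2 hy1 hy2
    linarith [hS]
  · -- a down, b down
    rw [hmaxa, hmaxb, haa, hbb]
    set C := -a₁ * -b₁ with hCd
    have hC : 0 ≤ C := by rw [hCd]; exact mul_nonneg (by linarith) (by linarith)
    rw [show a₁ * b₁ = C by rw [hCd]; ring,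
        show a₁ * (b₁ * y) = C*y by rw [hCd]; ring,
        show a₁ * x * b₁ = C*x by rw [hCd]; ring,
        show a₁ * x * (b₁ * y) = C*(x*y) by rw [hCd]; ring]
    rw [max_comm C (C*y), max_comm (C*x) (C*(x*y)),
        max_comm (max (C*y) C) (max (C*(x*y)) (C*x)),
        min_comm C (C*y), min_comm (C*x) (C*(x*y)),
        min_comm (min (C*y) C) (min (C*(x*y)) (C*x))]
    exact wid_scale C x y hC hx1 hx2 hy1 hy2
end

section
/- For all x ∈ [−1,1], the inequality 2(√2 − 1)·x − (3 − 2√2) ≤ x·|x| ≤ 2(√2 − 1)·x + (3 − 2√2) holds; i.e., the function x·|x| deviates from the linear function 2(√2−1)x by at most 3 − 2√2 on [−1,1]. -/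
/-- On `[−1,1]`, `x·|x|` deviates from `2(√2−1)x` by at most `3 − 2√2`. -/
theorem abs_mul_self_chebyshev :
    ∀ x ∈ Set.Icc (-1 : ℝ) 1,
      |x * |x| - 2 * (Real.sqrt 2 - 1) * x| ≤ 3 - 2 * Real.sqrt 2 := by
  intro x hx
  obtain ⟨h1, h2⟩ := hx
  have hs : Real.sqrt 2 ^ 2 = 2 := Real.sq_sqrt (by norm_num)
  have hs1 : (1:ℝ) ≤ Real.sqrt 2 := by
    nlinarith [Real.sqrt_nonneg 2]
  have hs2 : Real.sqrt 2 ≤ 3/2 := by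
    nlinarith [Real.sqrt_nonneg 2]
  rcases le_or_gt 0 x with hx0 | hx0
  · rw [abs_of_nonneg hx0, abs_le]
    constructor <;> nlinarith [sq_nonneg (x - (Real.sqrt 2 - 1)), sq_nonneg (x + (Real.sqrt 2 - 1)), sq_nonneg (1 - x)]
  · rw [abs_of_neg hx0, abs_le]
    constructor <;> nlinarith [sq_nonneg (x - (Real.sqrt 2 - 1)), sq_nonneg (x + (Real.sqrt 2 - 1)), sq_nonneg (1 + x)]
end
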